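/- arXiv:2412.08815 — 2 statements merged into one kernel-verified Lean document; each statement's English description precedes it below -/
import Mathlib

section
/- Let f ∈ ℚ[X] be a polynomial of even degree and let k be an odd positive integer. Then the discriminant of the polynomial f(X)·f(X^k) is the square of a rational number. -/
open Polynomial

/-- The product `∏_{i<j} (α_i - α_j)^2` over a list of complex numbers. -/
noncomputable def pairProd (l : List ℂ) : ℂ :=
  ∏ i : Fin l.length, ∏ j : Fin l.length,
    if (i : ℕ) < (j : ℕ) then (l.get i - l.get j) ^ 2 else 1

/-- The discriminant `Δ(f) = a_n^{2n-2} ∏_{i<j} (α_i - α_j)^2` of a rational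
polynomial, where `α_1, …, α_n` are its complex zeros with multiplicity. -/
noncomputable def polyDisc (f : ℚ[X]) : ℂ :=
  (f.leadingCoeff : ℂ) ^ (2 * (f.natDegree : ℤ) - 2) * pairProd ((f.aroots ℂ).toList)

/-!
Write `Δ` for `polyDisc`, `n` for the degree and `a` for the leading coefficient of `f`.
Evaluating the derivative of `∏ (X - αᵢ)` at the roots gives `∏ f'(αᵢ) = ± a^(n-2) Δ(f)`.
With the product rule this yields `Δ(fg) = Δ(f) Δ(g) Res(f, g)²`; with the chain rule, and since
the roots of `f(X^k)` are the `k`-th roots of those of `f`, it yields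
`Δ(f(X^k)) = (-1)^(n·C(k,2)) k^(nk) (a f(0))^(k-1) Δ(f)^k`. So
`Δ(f · f(X^k)) = ± k^(nk) (a f(0))^(k-1) Δ(f)^(k+1) Res(f, f(X^k))²`, in which the sign is `+` and
all exponents are even when `n` is even and `k` is odd. Finally `Δ(f)` is rational, being equal
to Mathlib's `Polynomial.discr f` (or to `a⁻²` when `f` is constant).
-/

open Finset in
lemma Fin.sum_card_Ioi (n : ℕ) : ∑ i : Fin n, #(Ioi i) = n.choose 2 := by
  simp only [Fin.card_Ioi]
  rw [Fin.sum_univ_eq_sum_range (fun i => n - 1 - i), sum_range_reflect (fun i => i) n,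
    sum_range_id, Nat.choose_two_right]

theorem Nat.choose_two_add (n m : ℕ) :
    (n + m).choose 2 = n.choose 2 + m.choose 2 + n * m := by
  have : (((n + m).choose 2 : ℕ) : ℚ) = n.choose 2 + m.choose 2 + n * m := by
    push_cast [Nat.cast_choose_two]
    ring
  exact_mod_cast this

theorem neg_one_pow_choose_two_pow {R : Type*} [Monoid R] [HasDistribNeg R] (n k : ℕ) :
    ((-1 : R) ^ n.choose 2) ^ k = (-1) ^ (n * k).choose 2 * (-1) ^ (n * k.choose 2) := by
  have h : (n * k).choose 2 + n * k.choose 2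
      = n.choose 2 * k + 2 * ((n + 1).choose 2 * k.choose 2) := by
    have : ((((n * k).choose 2 + n * k.choose 2 : ℕ)) : ℚ)
        = n.choose 2 * k + 2 * ((n + 1).choose 2 * k.choose 2) := by
      push_cast [Nat.cast_choose_two]
      ring
    exact_mod_cast this
  rw [← pow_mul, ← pow_add, h, pow_add, pow_mul (-1 : R) 2, neg_one_sq, one_pow, mul_one]

open Finset in
theorem pairProd_eq_prod_prod_Ioi (l : List ℂ) :
    pairProd l = ∏ i, ∏ j ∈ Ioi i, (l.get i - l.get j) ^ 2 := by
  refine prod_congr rfl fun i _ => ?_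
  rw [← prod_filter]
  congr 1
  ext j
  simp

open Finset in
theorem prod_eval_derivative_prod_X_sub_C (l : List ℂ) :
    ((l : Multiset ℂ).map fun x =>
        eval x (derivative ((l : Multiset ℂ).map (X - C ·)).prod)).prod
      = (-1) ^ l.length.choose 2 * pairProd l := by
  classical
  have hmap {M : Type} [CommMonoid M] (g : ℂ → M) :
      ((l : Multiset ℂ).map g).prod = ∏ i : Fin l.length, g (l.get i) := by
    rw [Multiset.map_coe, Multiset.prod_coe, ← Fin.prod_univ_fun_getElem]
    rfl
  have hnodal : ((l : Multiset ℂ).map (X - C ·)).prod = Lagrange.nodal univ l.get := hmap _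
  have hderiv (i : Fin l.length) :
      eval (l.get i) (derivative (Lagrange.nodal univ l.get))
        = ∏ j ∈ {i}ᶜ, (l.get i - l.get j) := by
    rw [Lagrange.eval_nodal_derivative_eval_node_eq (mem_univ i), Lagrange.eval_nodal,
      compl_eq_univ_sdiff, sdiff_singleton_eq_erase]
  rw [hmap, hnodal]
  simp only [hderiv]
  rw [← prod_prod_Ioi_mul_eq_prod_prod_off_diag (fun j i => l.get i - l.get j),
    pairProd_eq_prod_prod_Ioi, ← Fin.sum_card_Ioi, ← prod_pow_eq_pow_sum, ← prod_mul_distrib]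
  refine prod_congr rfl fun i _ => ?_
  rw [← prod_const, ← prod_mul_distrib]
  exact prod_congr rfl fun j _ => by ring

theorem prod_roots_eval_derivative (p : ℂ[X]) :
    (p.roots.map fun x => p.derivative.eval x).prod
      = (-1) ^ p.natDegree.choose 2 * p.leadingCoeff ^ p.natDegree * pairProd p.roots.toList := by
  have hsplit := IsAlgClosed.splits p
  have hderiv :
      derivative p = C p.leadingCoeff * derivative (p.roots.map fun a => X - C a).prod := by
    conv_lhs => rw [hsplit.eq_prod_roots]
    rw [derivative_C_mul]
  have key := prod_eval_derivative_prod_X_sub_C p.roots.toList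
  rw [Multiset.coe_toList, Multiset.length_toList] at key
  simp only [hderiv, eval_mul, eval_C, Multiset.prod_map_mul, Multiset.map_const',
    Multiset.prod_replicate, key, hsplit.natDegree_eq_card_roots]
  ring

theorem prod_roots_mul_eval_derivative {R : Type*} [CommRing R] [IsDomain R] {p q : R[X]}
    (hpq : p * q ≠ 0) :
    ((p * q).roots.map fun x => (p * q).derivative.eval x).prod =
      (p.roots.map fun x => p.derivative.eval x).prod *
        (q.roots.map fun x => q.derivative.eval x).prod *
        ((p.roots.map fun x => q.eval x).prod * (q.roots.map fun x => p.eval x).prod) := by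
  have hp : ∀ x ∈ p.roots, (p * q).derivative.eval x = p.derivative.eval x * q.eval x := by
    intro x hx
    simp [(isRoot_of_mem_roots hx).eq_zero]
  have hq : ∀ x ∈ q.roots, (p * q).derivative.eval x = q.derivative.eval x * p.eval x := by
    intro x hx
    simp [(isRoot_of_mem_roots hx).eq_zero, mul_comm]
  rw [roots_mul hpq, Multiset.map_add, Multiset.prod_add, Multiset.map_congr rfl hp,
    Multiset.map_congr rfl hq, Multiset.prod_map_mul, Multiset.prod_map_mul]
  ring

section IsAlgClosed

variable {K : Type*} [Field K] [IsAlgClosed K]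

theorem IsAlgClosed.card_nthRoots (k : ℕ) (a : K) :
    Multiset.card (nthRoots k a) = k := by
  rw [nthRoots, IsAlgClosed.card_roots_eq_natDegree, natDegree_X_pow_sub_C]

theorem roots_comp_X_pow (p : K[X]) {k : ℕ} (hk : 0 < k) :
    (p.comp (X ^ k)).roots = p.roots.bind (nthRoots k) := by
  rcases eq_or_ne p 0 with rfl | hp
  · simp
  conv_lhs => rw [(IsAlgClosed.splits p).eq_prod_roots]
  rw [mul_comp, C_comp, multiset_prod_comp, Multiset.map_map,
    roots_C_mul _ (leadingCoeff_ne_zero.2 hp), roots_multiset_prod, Multiset.bind_map]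
  · simp only [Function.comp_def, sub_comp, X_comp, C_comp]
    rfl
  · simp [X_pow_sub_C_ne_zero hk]

theorem prod_roots_comp_X_pow_eval_derivative (p : K[X]) {k : ℕ} (hk : 0 < k) :
    ((p.comp (X ^ k)).roots.map fun y => (p.comp (X ^ k)).derivative.eval y).prod =
      (k : K) ^ (p.natDegree * k) * (p.comp (X ^ k)).roots.prod ^ (k - 1) *
        (p.roots.map fun x => p.derivative.eval x).prod ^ k := by
  have hcard : Multiset.card (p.comp (X ^ k)).roots = p.natDegree * k := by
    rw [IsAlgClosed.card_roots_eq_natDegree, natDegree_comp, natDegree_X_pow]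
  have hderiv (y : K) : (p.comp (X ^ k)).derivative.eval y
      = k * y ^ (k - 1) * p.derivative.eval (y ^ k) := by
    simp [derivative_comp, eval_comp, derivative_X_pow]
  have hfibre : ((p.comp (X ^ k)).roots.map fun y => p.derivative.eval (y ^ k)).prod
      = (p.roots.map fun x => p.derivative.eval x).prod ^ k := by
    rw [roots_comp_X_pow p hk, Multiset.map_bind, Multiset.prod_bind, ← Multiset.prod_map_pow]
    refine congrArg _ (Multiset.map_congr rfl fun x _ => ?_)
    rw [Multiset.map_congr rfl fun y hy => by rw [(mem_nthRoots hk).1 hy], Multiset.map_const',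
      Multiset.prod_replicate, IsAlgClosed.card_nthRoots]
  simp only [hderiv, Multiset.prod_map_mul, Multiset.map_const', Multiset.prod_replicate, hcard,
    Multiset.prod_map_pow, Multiset.map_id', hfibre]

end IsAlgClosed

theorem pairProd_nil : pairProd [] = 1 :=
  Fin.prod_univ_zero _

theorem polyDisc_zero : polyDisc 0 = 0 := by
  simp [polyDisc]

noncomputable def prodRootsEval (f g : ℚ[X]) : ℂ :=
  ((f.aroots ℂ).map fun x => aeval x g).prod

theorem prodRootsEval_eq (f g : ℚ[X]) :
    prodRootsEval f g = ((f.map (algebraMap ℚ ℂ)).roots.map fun x =>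
      (g.map (algebraMap ℚ ℂ)).eval x).prod := by
  simp only [prodRootsEval, aroots_def, eval_map_algebraMap]

theorem leadingCoeff_pow_mul_prodRootsEval_derivative {f : ℚ[X]} (hf : f ≠ 0) :
    (f.leadingCoeff : ℂ) ^ f.natDegree * prodRootsEval f (derivative f)
      = (-1) ^ f.natDegree.choose 2 * (f.leadingCoeff : ℂ) ^ 2 * polyDisc f := by
  have ha : (f.leadingCoeff : ℂ) ≠ 0 := by simpa using hf
  have hpow : (f.leadingCoeff : ℂ) ^ 2 * (f.leadingCoeff : ℂ) ^ (2 * (f.natDegree : ℤ) - 2)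
      = (f.leadingCoeff : ℂ) ^ f.natDegree * (f.leadingCoeff : ℂ) ^ f.natDegree := by
    rw [← zpow_natCast, ← zpow_natCast _ f.natDegree, ← zpow_add₀ ha, ← zpow_add₀ ha]
    congr 1
    push_cast
    ring
  rw [prodRootsEval_eq, ← derivative_map, prod_roots_eval_derivative, natDegree_map,
    leadingCoeff_map, eq_ratCast, polyDisc, aroots_def]
  linear_combination (-1) ^ f.natDegree.choose 2 *
    pairProd (f.map (algebraMap ℚ ℂ)).roots.toList * hpow.symm

theorem ratCast_resultant (f g : ℚ[X]) {m : ℕ} (hg : g.natDegree ≤ m) :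
    ((resultant f g f.natDegree m : ℚ) : ℂ)
      = (f.leadingCoeff : ℂ) ^ m * prodRootsEval f g := by
  have h := resultant_eq_prod_eval (f.map (algebraMap ℚ ℂ)) (g.map (algebraMap ℚ ℂ)) m
    ((natDegree_map _).trans_le hg) (IsAlgClosed.splits _)
  rwa [natDegree_map, resultant_map_map, leadingCoeff_map, eq_ratCast, eq_ratCast,
    ← prodRootsEval_eq] at h

theorem prodRootsEval_mul_derivative {f g : ℚ[X]} (hfg : f * g ≠ 0) :
    prodRootsEval (f * g) (derivative (f * g)) = prodRootsEval f (derivative f) *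
      prodRootsEval g (derivative g) * (prodRootsEval f g * prodRootsEval g f) := by
  simp only [prodRootsEval_eq, Polynomial.map_mul, ← derivative_map]
  exact prod_roots_mul_eval_derivative (by simpa using hfg)

theorem prodRootsEval_comp_X_pow_derivative (f : ℚ[X]) {k : ℕ} (hk : 0 < k) :
    prodRootsEval (f.comp (X ^ k)) (derivative (f.comp (X ^ k)))
      = (k : ℂ) ^ (f.natDegree * k) * ((f.comp (X ^ k)).aroots ℂ).prod ^ (k - 1) *
        prodRootsEval f (derivative f) ^ k := by
  simp only [prodRootsEval_eq, aroots_def, Polynomial.map_comp, Polynomial.map_pow, map_X,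
    ← derivative_map]
  rw [prod_roots_comp_X_pow_eval_derivative _ hk, natDegree_map]

theorem leadingCoeff_mul_prod_aroots (f : ℚ[X]) :
    (f.leadingCoeff : ℂ) * (f.aroots ℂ).prod
      = (-1) ^ f.natDegree * ((f.eval 0 : ℚ) : ℂ) := by
  have h :=
    (IsAlgClosed.splits (f.map (algebraMap ℚ ℂ))).coeff_zero_eq_leadingCoeff_mul_prod_roots
  rw [coeff_map, natDegree_map, leadingCoeff_map, coeff_zero_eq_eval_zero, eq_ratCast,
    eq_ratCast, ← aroots_def] at h
  rw [h, ← mul_assoc, ← mul_assoc, ← pow_add, ← two_mul, pow_mul, neg_one_sq, one_pow,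
    one_mul]

theorem polyDisc_eq_discr {f : ℚ[X]} (hf : 0 < f.natDegree) : polyDisc f = (f.discr : ℂ) := by
  have hf0 : f ≠ 0 := ne_zero_of_natDegree_gt hf
  have hres : ((resultant f (derivative f) f.natDegree (f.natDegree - 1) : ℚ) : ℂ)
      = (-1) ^ f.natDegree.choose 2 * f.leadingCoeff * f.discr := by
    rw [resultant_deriv (natDegree_pos_iff_degree_pos.1 hf), Nat.choose_two_right]
    push_cast
    rfl
  rw [ratCast_resultant _ _ (natDegree_derivative_le f)] at hres
  have hprod := leadingCoeff_pow_mul_prodRootsEval_derivative hf0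
  rw [← pow_sub_one_mul hf.ne'] at hprod
  have hunit : (-1 : ℂ) ^ f.natDegree.choose 2 * (f.leadingCoeff : ℂ) ^ 2 ≠ 0 := by simp [hf0]
  refine mul_left_cancel₀ hunit ?_
  linear_combination (f.leadingCoeff : ℂ) * hres - hprod

theorem exists_polyDisc_eq_ratCast (f : ℚ[X]) : ∃ q : ℚ, polyDisc f = q := by
  rcases Nat.eq_zero_or_pos f.natDegree with h | h
  · rw [eq_C_of_natDegree_eq_zero h]
    exact ⟨(f.coeff 0)⁻¹ ^ 2, by simp [polyDisc, pairProd_nil]⟩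
  · exact ⟨_, polyDisc_eq_discr h⟩

theorem polyDisc_mul (f g : ℚ[X]) :
    polyDisc (f * g) = polyDisc f * polyDisc g * ((resultant f g : ℚ) : ℂ) ^ 2 := by
  rcases eq_or_ne f 0 with rfl | hf
  · simp [polyDisc_zero]
  rcases eq_or_ne g 0 with rfl | hg
  · simp [polyDisc_zero]
  have hfg := leadingCoeff_pow_mul_prodRootsEval_derivative (mul_ne_zero hf hg)
  rw [prodRootsEval_mul_derivative (mul_ne_zero hf hg), natDegree_mul hf hg, leadingCoeff_mul,
    Nat.choose_two_add, Rat.cast_mul] at hfg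
  have hdf := leadingCoeff_pow_mul_prodRootsEval_derivative hf
  have hdg := leadingCoeff_pow_mul_prodRootsEval_derivative hg
  have hresf := ratCast_resultant f g le_rfl
  have hresg := ratCast_resultant g f le_rfl
  rw [resultant_comm, Rat.cast_mul, Rat.cast_pow, Rat.cast_neg, Rat.cast_one] at hresg
  set n := f.natDegree
  set m := g.natDegree
  set a : ℂ := (f.leadingCoeff : ℂ)
  set b : ℂ := (g.leadingCoeff : ℂ)
  set R : ℂ := ((resultant f g : ℚ) : ℂ)
  have hunit : (-1 : ℂ) ^ (n.choose 2 + m.choose 2 + n * m) * (a * b) ^ 2 ≠ 0 := by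
    simp [a, b, hf, hg]
  refine mul_left_cancel₀ hunit ?_
  calc _ = a ^ n * prodRootsEval f (derivative f) * (b ^ m * prodRootsEval g (derivative g)) *
        (a ^ m * prodRootsEval f g) * (b ^ n * prodRootsEval g f) := by
        rw [← hfg]
        ring
    _ = (-1) ^ n.choose 2 * a ^ 2 * polyDisc f * ((-1) ^ m.choose 2 * b ^ 2 * polyDisc g) *
        R * ((-1) ^ (m * n) * R) := by
        rw [hdf, hdg, ← hresf, ← hresg]
    _ = _ := by ring

theorem polyDisc_comp_X_pow (f : ℚ[X]) {k : ℕ} (hk : 0 < k) :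
    polyDisc (f.comp (X ^ k)) = (-1) ^ (f.natDegree * k.choose 2) * (k : ℂ) ^ (f.natDegree * k) *
      ((f.leadingCoeff : ℂ) * ((f.eval 0 : ℚ) : ℂ)) ^ (k - 1) * polyDisc f ^ k := by
  rcases eq_or_ne f 0 with rfl | hf
  · simp [polyDisc_zero, hk.ne']
  obtain ⟨j, rfl⟩ : ∃ j, k = j + 1 := ⟨k - 1, by omega⟩
  have hdeg : (f.comp (X ^ (j + 1))).natDegree = f.natDegree * (j + 1) := by
    rw [natDegree_comp, natDegree_X_pow]
  have hlc : (f.comp (X ^ (j + 1))).leadingCoeff = f.leadingCoeff := by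
    rw [leadingCoeff_comp (by simp), leadingCoeff_X_pow, one_pow, mul_one]
  have hfk : f.comp (X ^ (j + 1)) ≠ 0 := by
    rw [← leadingCoeff_ne_zero, hlc]
    exact leadingCoeff_ne_zero.2 hf
  have hdfk := leadingCoeff_pow_mul_prodRootsEval_derivative hfk
  rw [hdeg, hlc] at hdfk
  have hdf := leadingCoeff_pow_mul_prodRootsEval_derivative hf
  have hroots := leadingCoeff_mul_prod_aroots (f.comp (X ^ (j + 1)))
  rw [hdeg, hlc] at hroots
  simp only [eval_comp, eval_pow, eval_X, zero_pow j.succ_ne_zero] at hroots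
  have hsign : ((-1 : ℂ) ^ (f.natDegree * (j + 1))) ^ j = 1 := by
    rw [← pow_mul, mul_assoc, mul_comm (j + 1)]
    exact ((Nat.even_mul_succ_self j).mul_left _).neg_one_pow
  set n := f.natDegree
  set a : ℂ := (f.leadingCoeff : ℂ)
  have hunit : (-1 : ℂ) ^ (n * (j + 1)).choose 2 * a ^ (j + 2) ≠ 0 := by
    simp [a, hf]
  refine mul_left_cancel₀ hunit ?_
  calc _ = a ^ j * (a ^ (n * (j + 1)) * prodRootsEval (f.comp (X ^ (j + 1)))
        (derivative (f.comp (X ^ (j + 1))))) := by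
        rw [hdfk]
        ring
    _ = (j + 1 : ℕ) ^ (n * (j + 1)) * (a * ((f.comp (X ^ (j + 1))).aroots ℂ).prod) ^ j *
        (a ^ n * prodRootsEval f (derivative f)) ^ (j + 1) := by
        rw [prodRootsEval_comp_X_pow_derivative f hk, Nat.add_sub_cancel]
        ring
    _ = (j + 1 : ℕ) ^ (n * (j + 1)) * ((-1) ^ (n * (j + 1)) * ((f.eval 0 : ℚ) : ℂ)) ^ j *
        ((-1) ^ n.choose 2 * a ^ 2 * polyDisc f) ^ (j + 1) := by
        rw [hroots, hdf]
    _ = _ := by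
        rw [mul_pow, hsign, mul_pow, mul_pow, neg_one_pow_choose_two_pow, Nat.add_sub_cancel]
        ring

theorem disc_mul_comp_pow_is_square_general (f : ℚ[X]) (heven : Even f.natDegree)
    (k : ℕ) (hodd : Odd k) :
    ∃ q : ℚ, polyDisc (f * f.comp (X ^ k)) = (q : ℂ) ^ 2 := by
  obtain ⟨δ, hδ⟩ := exists_polyDisc_eq_ratCast f
  obtain ⟨m, hm⟩ := heven
  obtain ⟨j, rfl⟩ := hodd
  have hsign : (-1 : ℂ) ^ (f.natDegree * (2 * j + 1).choose 2) = 1 :=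
    (Even.mul_right ⟨m, hm⟩ _).neg_one_pow
  refine ⟨(2 * j + 1 : ℚ) ^ (m * (2 * j + 1)) * (f.leadingCoeff * f.eval 0) ^ j * δ ^ (j + 1) *
    resultant f (f.comp (X ^ (2 * j + 1))), ?_⟩
  rw [polyDisc_mul, polyDisc_comp_X_pow f (by omega), hsign, hδ, hm, Nat.add_sub_cancel]
  push_cast
  ring

/-- If `f` has even degree and `k` is odd, then `f(X)·f(X^k)` has square discriminant. -/
theorem disc_mul_comp_pow_is_square (f : ℚ[X]) (heven : Even f.natDegree)
    (k : ℕ) (hk : 0 < k) (hodd : Odd k) :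
    ∃ q : ℚ, polyDisc (f * f.comp (X ^ k)) = (q : ℂ) ^ 2 :=
  disc_mul_comp_pow_is_square_general f heven k hodd
end

section
/- Let f ∈ ℚ[X] be a polynomial with f(0) ≠ 0, and let f_rev(X) = X^{deg f} f(1/X) be its reversal. Then Δ(f_rev) = Δ(f). -/
open Polynomial

/-!
Over `ℂ` write `f = a ∏ (X - αᵢ)`; all `αᵢ ≠ 0` because `f(0) ≠ 0`. Then `f_rev = a ∏ (1 - αᵢ X)`
has the zeros `αᵢ⁻¹` and leading coefficient `f(0) = (-1)ⁿ a ∏ αᵢ`. Since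
`(α⁻¹ - β⁻¹)² = (α - β)² / (αβ)²` and each `αᵢ` occurs in `n - 1` pairs, the pair product of the
`αᵢ⁻¹` is `(∏ αᵢ)^(2 - 2n)` times that of the `αᵢ`, which cancels the factor `(∏ αᵢ)^(2n - 2)`
contributed by the leading coefficient.
-/

lemma pairProd_cons (a : ℂ) (l : List ℂ) :
    pairProd (a :: l) = (l.map fun x => (a - x) ^ 2).prod * pairProd l := by
  change (∏ i : Fin (l.length + 1), ∏ j : Fin (l.length + 1), _) = _
  rw [Fin.prod_univ_succ]
  congr 1
  · rw [Fin.prod_univ_succ, ← List.ofFn_get (l.map fun x => (a - x) ^ 2), ← Fin.prod_ofFn]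
    simp
  · refine Finset.prod_congr rfl fun i _ => ?_
    rw [Fin.prod_univ_succ]
    simp

lemma pairProd_perm {l₁ l₂ : List ℂ} (h : l₁.Perm l₂) : pairProd l₁ = pairProd l₂ := by
  induction h with
  | nil => rfl
  | cons a h ih => rw [pairProd_cons, pairProd_cons, ih, (h.map _).prod_eq]
  | swap a b l =>
    simp only [pairProd_cons, List.map_cons, List.prod_cons]
    ring
  | trans _ _ ih₁ ih₂ => rw [ih₁, ih₂]

lemma prod_map_inv_sub_inv_sq {a : ℂ} (ha : a ≠ 0) {l : List ℂ} (hl : ∀ x ∈ l, x ≠ 0) :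
    (l.map fun x => (a⁻¹ - x⁻¹) ^ 2).prod =
      ((a ^ l.length * l.prod) ^ 2)⁻¹ * (l.map fun x => (a - x) ^ 2).prod := by
  have hterm : ∀ x ∈ l, (a⁻¹ - x⁻¹) ^ 2 = ((a * x) ^ 2)⁻¹ * (a - x) ^ 2 := by
    intro x hx
    field_simp [hl x hx]
    ring
  rw [List.map_congr_left hterm, List.prod_map_mul, ← Multiset.prod_coe, ← Multiset.map_coe,
    Multiset.prod_map_inv, Multiset.prod_map_pow, Multiset.prod_map_mul]
  simp

lemma pairProd_map_inv {l : List ℂ} (hl : ∀ x ∈ l, x ≠ 0) :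
    pairProd (l.map (·⁻¹)) = l.prod ^ (2 - 2 * (l.length : ℤ)) * pairProd l := by
  induction l with
  | nil => simp
  | cons a t ih =>
    obtain ⟨ha, ht⟩ := List.forall_mem_cons.mp hl
    have hP : t.prod ≠ 0 := List.prod_ne_zero fun h => ht 0 h rfl
    rw [List.map_cons, pairProd_cons, List.map_map, Function.comp_def,
      prod_map_inv_sub_inv_sq ha ht, ih ht, pairProd_cons, List.prod_cons, List.length_cons]
    have hzpow : ((a ^ t.length * t.prod) ^ 2)⁻¹ * t.prod ^ (2 - 2 * (t.length : ℤ)) =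
        (a * t.prod) ^ (2 - 2 * ((t.length + 1 : ℕ) : ℤ)) := by
      rw [zpow_sub₀ hP, zpow_sub₀ (mul_ne_zero ha hP)]
      norm_cast
      field_simp
      ring
    rw [← hzpow]
    ring

lemma pairProd_toList_map_inv {s : Multiset ℂ} (hs : ∀ x ∈ s, x ≠ 0) :
    pairProd (s.map (·⁻¹)).toList =
      s.prod ^ (2 - 2 * (Multiset.card s : ℤ)) * pairProd s.toList := by
  have hperm : (s.map (·⁻¹)).toList.Perm (s.toList.map (·⁻¹)) := by
    rw [← Multiset.coe_eq_coe, Multiset.coe_toList, ← Multiset.map_coe, Multiset.coe_toList]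
  rw [pairProd_perm hperm, pairProd_map_inv (by simpa using hs), Multiset.length_toList,
    Multiset.prod_toList]

namespace Polynomial

lemma reverse_one {R : Type*} [Semiring R] : (1 : R[X]).reverse = 1 := by
  simpa using reverse_C (1 : R)

lemma ne_zero_of_mem_roots_of_coeff_zero_ne_zero {R : Type*} [CommRing R] [IsDomain R]
    {g : R[X]} (h0 : g.coeff 0 ≠ 0) {a : R} (ha : a ∈ g.roots) : a ≠ 0 := by
  rintro rfl
  exact h0 (coeff_zero_eq_eval_zero g ▸ (mem_roots'.mp ha).2)

variable {K : Type*} [Field K]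

lemma reverse_X_sub_C_of_ne_zero {a : K} (ha : a ≠ 0) :
    (X - C a).reverse = C (-a) * (X - C a⁻¹) := by
  have hX : (X : K[X]).reverse = 1 := by simpa [reverse_one] using reverse_mul_X (1 : K[X])
  rw [sub_eq_add_neg, ← C_neg, reverse_add_C, hX, natDegree_X, pow_one, mul_sub, ← C_mul,
    neg_mul, mul_inv_cancel₀ ha]
  simp only [map_neg, neg_mul, map_one, sub_neg_eq_add]
  ring

lemma reverse_prod_X_sub_C {s : Multiset K} (hs : ∀ a ∈ s, a ≠ 0) :
    (s.map (X - C ·)).prod.reverse =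
      C (s.map (-·)).prod * (s.map fun a => X - C a⁻¹).prod := by
  induction s using Multiset.induction_on with
  | empty => simp [reverse_one]
  | cons a s ih =>
    obtain ⟨ha, hs⟩ := Multiset.forall_mem_cons.mp hs
    simp only [Multiset.map_cons, Multiset.prod_cons, reverse_mul_of_domain,
      reverse_X_sub_C_of_ne_zero ha, ih hs, C_mul]
    ring

lemma Splits.roots_reverse {g : K[X]} (hg : g.Splits) (h0 : g.coeff 0 ≠ 0) :
    g.reverse.roots = g.roots.map (·⁻¹) := by
  have hroots : ∀ a ∈ g.roots, a ≠ 0 := fun _ =>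
    ne_zero_of_mem_roots_of_coeff_zero_ne_zero h0
  have hc : g.leadingCoeff * (g.roots.map (-·)).prod ≠ 0 := by
    refine mul_ne_zero (leadingCoeff_ne_zero.mpr ?_) (Multiset.prod_ne_zero ?_)
    · rintro rfl
      exact h0 rfl
    · simpa only [Multiset.mem_map, neg_eq_zero, not_exists, not_and] using hroots
  conv_lhs => rw [hg.eq_prod_roots]
  rw [reverse_mul_of_domain, reverse_C, reverse_prod_X_sub_C hroots, ← mul_assoc, ← C_mul,
    roots_C_mul _ hc]
  simpa [Function.comp_def] using roots_multiset_prod_X_sub_C (g.roots.map (·⁻¹))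

lemma reverse_map {L : Type*} [Semiring L] [Nontrivial L] (φ : K →+* L) (f : K[X]) :
    (f.map φ).reverse = f.reverse.map φ := by
  rw [reverse, reverse, natDegree_map, reflect_map]

lemma aroots_reverse {L : Type*} [Field L] [IsAlgClosed L] [Algebra K L] {f : K[X]}
    (h0 : f.coeff 0 ≠ 0) : f.reverse.aroots L = (f.aroots L).map (·⁻¹) := by
  rw [aroots_def, aroots_def, ← reverse_map]
  exact (IsAlgClosed.splits _).roots_reverse (by simpa using h0)

end Polynomial

/-- The reversal map `f ↦ X^(deg f) f(1/X)` preserves the discriminant of polynomials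
with nonzero constant term. -/
theorem disc_reverse_eq (f : ℚ[X]) (h0 : f.eval 0 ≠ 0) :
    polyDisc f.reverse = polyDisc f := by
  rw [← coeff_zero_eq_eval_zero] at h0
  have htrail : f.natTrailingDegree = 0 := natTrailingDegree_eq_zero.mpr (Or.inr h0)
  have hroots : ∀ x ∈ f.aroots ℂ, x ≠ 0 := fun _ =>
    ne_zero_of_mem_roots_of_coeff_zero_ne_zero (by simpa using h0)
  have hcoeff : (f.coeff 0 : ℂ) = (-1) ^ f.natDegree * f.leadingCoeff * (f.aroots ℂ).prod := by
    simpa using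
      (IsAlgClosed.splits (f.map (algebraMap ℚ ℂ))).coeff_zero_eq_leadingCoeff_mul_prod_roots
  have hP : (f.aroots ℂ).prod ≠ 0 := Multiset.prod_ne_zero fun h => hroots 0 h rfl
  rw [polyDisc, polyDisc, reverse_natDegree, htrail, Nat.sub_zero, reverse_leadingCoeff,
    trailingCoeff_eq_coeff_zero h0, aroots_reverse h0, pairProd_toList_map_inv hroots,
    IsAlgClosed.card_aroots_eq_natDegree, hcoeff]
  set n := f.natDegree
  have hsign : ((-1 : ℂ) ^ n) ^ (2 * (n : ℤ) - 2) = 1 := by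
    rcases neg_one_pow_eq_or ℂ n with h | h <;> rw [h]
    · exact one_zpow _
    · exact Even.neg_one_zpow ⟨n - 1, by ring⟩
  calc _ = ((-1) ^ n) ^ (2 * (n : ℤ) - 2) * (f.leadingCoeff : ℂ) ^ (2 * (n : ℤ) - 2) *
        ((f.aroots ℂ).prod ^ (2 * (n : ℤ) - 2) * (f.aroots ℂ).prod ^ (2 - 2 * (n : ℤ))) *
        pairProd (f.aroots ℂ).toList := by rw [mul_zpow, mul_zpow]; ring
    _ = _ := by
      rw [hsign, ← zpow_add₀ hP, sub_add_sub_cancel', sub_self, zpow_zero, one_mul, mul_one]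
end
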